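/- For η > 0 and θ ∈ (−π/2, 0), with r_η(θ) = (η − √(η² + 4sin²θ))/(2 sinθ), one has sup_{θ∈(−π/2,0)} r_η(θ)² = (√(1 + η²/4) − η/2)², and if v* denotes this supremum then (1 − v*)² = η² v*. -/

import Mathlib

/-!
With `t = -sin θ ∈ (0, 1)`, the value `r = r_η(θ)` is the positive root of `r² + (η/t) r - 1 = 0`.
The positive root of `x² + b x - 1` decreases in `b`, so `r_η(θ)` grows as `θ` decreases to `-π/2`,
and the supremum is the value at `θ = -π/2`, the positive root `v` of `x² + η x - 1`.
Then `1 - v² = η v`, which is the identity for `v* = v²`.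
-/

/-- The radial function `r_η(θ)` parametrizing `|m(E_η(θ) + iη)|`. -/
noncomputable def rEta (η θ : ℝ) : ℝ :=
  (η - Real.sqrt (η ^ 2 + 4 * Real.sin θ ^ 2)) / (2 * Real.sin θ)

open Real Set Filter Topology

noncomputable def posRootQuad (b : ℝ) : ℝ := (√(b ^ 2 + 4) - b) / 2

lemma sq_sqrt_sq_add_four (b : ℝ) : √(b ^ 2 + 4) ^ 2 = b ^ 2 + 4 :=
  sq_sqrt (by positivity)

lemma abs_lt_sqrt_sq_add_four (b : ℝ) : |b| < √(b ^ 2 + 4) := by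
  rw [← sqrt_sq_eq_abs]
  exact sqrt_lt_sqrt (sq_nonneg b) (by linarith)

lemma posRootQuad_sq_add_mul (b : ℝ) : posRootQuad b ^ 2 + b * posRootQuad b = 1 := by
  unfold posRootQuad
  linear_combination sq_sqrt_sq_add_four b / 4

lemma posRootQuad_pos (b : ℝ) : 0 < posRootQuad b := by
  have := abs_lt_sqrt_sq_add_four b
  unfold posRootQuad
  linarith [le_abs_self b]

lemma add_posRootQuad_pos (b : ℝ) : 0 < b + posRootQuad b := by
  have := abs_lt_sqrt_sq_add_four b
  unfold posRootQuad
  linarith [neg_abs_le b]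

lemma posRootQuad_antitone : Antitone posRootQuad := by
  intro b c hbc
  set x := posRootQuad b
  set y := posRootQuad c
  -- the difference of the two quadratic equations
  have hfactor : (x - y) * (b + x + y) = (c - b) * y := by
    linear_combination posRootQuad_sq_add_mul b - posRootQuad_sq_add_mul c
  have hpos : 0 < b + x + y := by linarith [add_posRootQuad_pos b, posRootQuad_pos c]
  nlinarith [mul_nonneg (sub_nonneg.2 hbc) (posRootQuad_pos c).le]

lemma sqrt_one_add_sq_div_four_sub_half (η : ℝ) : √(1 + η ^ 2 / 4) - η / 2 = posRootQuad η := by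
  rw [posRootQuad, show 1 + η ^ 2 / 4 = (η ^ 2 + 4) / 2 ^ 2 by ring,
    sqrt_div' _ (by positivity), sqrt_sq zero_le_two]
  ring

lemma rEta_eq_posRootQuad (η : ℝ) {θ : ℝ} (hθ : sin θ < 0) :
    rEta η θ = posRootQuad (η / -sin θ) := by
  have ht : 0 < -sin θ := neg_pos.2 hθ
  have hs : sin θ ≠ 0 := hθ.ne
  have hsqrt : √((η / -sin θ) ^ 2 + 4) = √(η ^ 2 + 4 * sin θ ^ 2) / -sin θ := by
    rw [show (η / -sin θ) ^ 2 + 4 = (η ^ 2 + 4 * sin θ ^ 2) / (-sin θ) ^ 2 by field_simp,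
      sqrt_div' _ (sq_nonneg _), sqrt_sq ht.le]
  rw [rEta, posRootQuad, hsqrt]
  field_simp
  ring

lemma rEta_neg_pi_div_two (η : ℝ) : rEta η (-(π / 2)) = posRootQuad η := by
  rw [rEta_eq_posRootQuad η (by simp), sin_neg, sin_pi_div_two, neg_neg, div_one]

lemma continuousAt_rEta (η : ℝ) {θ : ℝ} (hθ : sin θ ≠ 0) : ContinuousAt (rEta η) θ := by
  unfold rEta
  exact ContinuousAt.div (by fun_prop) (by fun_prop) (mul_ne_zero two_ne_zero hθ)

lemma sin_neg_of_mem_Ioo_neg_pi_div_two_zero {θ : ℝ} (hθ : θ ∈ Ioo (-(π / 2)) 0) : sin θ < 0 :=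
  sin_neg_of_neg_of_neg_pi_lt hθ.2 (by linarith [hθ.1, pi_pos])

lemma antitoneOn_rEta_sq {η : ℝ} (hη : 0 ≤ η) :
    AntitoneOn (fun θ => rEta η θ ^ 2) (Ioo (-(π / 2)) 0) := by
  intro θ₁ hθ₁ θ₂ hθ₂ hle
  have hs₂ := sin_neg_of_mem_Ioo_neg_pi_div_two_zero hθ₂
  have hsin : sin θ₁ ≤ sin θ₂ :=
    sin_le_sin_of_le_of_le_pi_div_two hθ₁.1.le (by linarith [hθ₂.2, pi_pos]) hle
  dsimp only
  rw [rEta_eq_posRootQuad η (sin_neg_of_mem_Ioo_neg_pi_div_two_zero hθ₁),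
    rEta_eq_posRootQuad η hs₂]
  refine pow_le_pow_left₀ (posRootQuad_pos _).le (posRootQuad_antitone ?_) 2
  exact div_le_div_of_nonneg_left hη (neg_pos.2 hs₂) (neg_le_neg hsin)

lemma isLUB_rEta_sq {η : ℝ} (hη : 0 ≤ η) :
    IsLUB ((fun θ => rEta η θ ^ 2) '' Ioo (-(π / 2)) 0) (posRootQuad η ^ 2) := by
  refine (isGLB_Ioo (by linarith [pi_pos])).isLUB_of_tendsto (antitoneOn_rEta_sq hη)
    (nonempty_Ioo.2 (by linarith [pi_pos])) ?_
  rw [← rEta_neg_pi_div_two]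
  exact ((continuousAt_rEta η (by simp)).pow 2).continuousWithinAt.tendsto

theorem stmt_14 (η : ℝ) (hη : 0 < η) :
    sSup ((fun θ => (rEta η θ) ^ 2) '' Set.Ioo (-(Real.pi / 2)) 0)
        = (Real.sqrt (1 + η ^ 2 / 4) - η / 2) ^ 2 ∧
      (1 - (Real.sqrt (1 + η ^ 2 / 4) - η / 2) ^ 2) ^ 2
        = η ^ 2 * (Real.sqrt (1 + η ^ 2 / 4) - η / 2) ^ 2 := by
  rw [sqrt_one_add_sq_div_four_sub_half]
  refine ⟨(isLUB_rEta_sq hη.le).csSup_eq ((nonempty_Ioo.2 (by linarith [pi_pos])).image _), ?_⟩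
  linear_combination (-(1 - posRootQuad η ^ 2 + η * posRootQuad η)) * posRootQuad_sq_add_mul η
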